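/- arXiv:0902.3298 — 2 statements merged into one kernel-verified Lean document; each statement's English description precedes it below -/
import Mathlib

section
/- For every real number a with 1/2 < a < 2/π and every x > 0, one has arctan x > 4a(1 − a²)·x/(a + √(1 + x²)). -/
/-! With `s = √(1 + t²)`, the derivative of `g(t) = arctan t - 4a(1 - a²) t / (a + s)` is
`((2a² - 1) s + a)² / (s² (a + s)²)`, because `(a + s)² - 4a(1 - a²) s (a s + 1)` is a perfect
square. So `g' ≥ 0` on `[0, ∞)`, vanishing for at most one value of `s`, hence of `t ≥ 0`; thus
`g` is strictly increasing there, and `g 0 = 0` gives `g x > 0` for `x > 0`. -/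

open Real Set

theorem strictMonoOn_of_hasDerivAt_nonneg_of_subsingleton_zeros {D : Set ℝ} (hD : D.OrdConnected)
    {f f' : ℝ → ℝ} (hf : ∀ t ∈ D, HasDerivAt f (f' t) t) (hf'_nonneg : ∀ t ∈ D, 0 ≤ f' t)
    (hzeros : {t ∈ D | f' t = 0}.Subsingleton) : StrictMonoOn f D := by
  have lt_of_ne_zero : ∀ u ∈ D, ∀ v ∈ D, u < v → (∀ t ∈ Ioo u v, f' t ≠ 0) → f u < f v := by
    intro u hu v hv huv hne
    have hsub : Icc u v ⊆ D := hD.out hu hv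
    refine strictMonoOn_of_hasDerivWithinAt_pos (convex_Icc u v)
      (fun t ht ↦ (hf t (hsub ht)).continuousAt.continuousWithinAt)
      (fun t ht ↦ (hf t (hsub (interior_subset ht))).hasDerivWithinAt) (fun t ht ↦ ?_)
      (left_mem_Icc.2 huv.le) (right_mem_Icc.2 huv.le) huv
    rw [interior_Icc] at ht
    exact (hf'_nonneg t (hsub (Ioo_subset_Icc_self ht))).lt_of_ne (hne t ht).symm
  intro x hx y hy hxy
  by_cases hzero : ∃ c ∈ Ioo x y, f' c = 0
  · obtain ⟨c, hc, hc0⟩ := hzero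
    have hcD : c ∈ D := hD.out hx hy (Ioo_subset_Icc_self hc)
    have hne : ∀ t ∈ D, t ≠ c → f' t ≠ 0 := fun t ht htc ht0 ↦ htc (hzeros ⟨ht, ht0⟩ ⟨hcD, hc0⟩)
    calc f x < f c := lt_of_ne_zero x hx c hcD hc.1 fun t ht ↦
          hne t (hD.out hx hcD (Ioo_subset_Icc_self ht)) ht.2.ne
      _ < f y := lt_of_ne_zero c hcD y hy hc.2 fun t ht ↦
          hne t (hD.out hcD hy (Ioo_subset_Icc_self ht)) ht.1.ne'
  · push Not at hzero
    exact lt_of_ne_zero x hx y hy hxy hzero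

theorem one_le_sqrt_one_add_sq (t : ℝ) : 1 ≤ √(1 + t ^ 2) :=
  one_le_sqrt.2 (le_add_of_nonneg_right (sq_nonneg t))

theorem hasDerivAt_sqrt_one_add_sq (t : ℝ) :
    HasDerivAt (fun u ↦ √(1 + u ^ 2)) (t / √(1 + t ^ 2)) t := by
  have h := ((hasDerivAt_pow 2 t).const_add 1).sqrt (by positivity)
  convert h using 1
  field_simp
  ring

noncomputable def arctanGap (a t : ℝ) : ℝ :=
  arctan t - 4 * a * (1 - a ^ 2) * t / (a + √(1 + t ^ 2))

theorem hasDerivAt_arctanGap {a : ℝ} (ha : -1 < a) (t : ℝ) :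
    HasDerivAt (arctanGap a)
      (((2 * a ^ 2 - 1) * √(1 + t ^ 2) + a) ^ 2 / ((1 + t ^ 2) * (a + √(1 + t ^ 2)) ^ 2)) t := by
  have hs := one_le_sqrt_one_add_sq t
  have hden : a + √(1 + t ^ 2) ≠ 0 := by linarith
  have h := (hasDerivAt_arctan t).sub
    (((hasDerivAt_id t).const_mul (4 * a * (1 - a ^ 2))).div
      ((hasDerivAt_sqrt_one_add_sq t).const_add a) hden)
  refine h.congr_deriv ?_
  have hs_sq : √(1 + t ^ 2) ^ 2 = 1 + t ^ 2 := sq_sqrt (by positivity)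
  generalize √(1 + t ^ 2) = s at hs hden hs_sq ⊢
  rw [← hs_sq, id]
  field_simp
  linear_combination (-4 * a * (1 - a ^ 2) * s) * hs_sq

theorem strictMonoOn_arctanGap {a : ℝ} (ha : -1 < a) : StrictMonoOn (arctanGap a) (Ici 0) := by
  refine strictMonoOn_of_hasDerivAt_nonneg_of_subsingleton_zeros ordConnected_Ici
    (fun t _ ↦ hasDerivAt_arctanGap ha t) (fun t _ ↦ by positivity) ?_
  have numerator_eq_zero : ∀ t : ℝ,
      ((2 * a ^ 2 - 1) * √(1 + t ^ 2) + a) ^ 2 / ((1 + t ^ 2) * (a + √(1 + t ^ 2)) ^ 2) = 0 →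
      (2 * a ^ 2 - 1) * √(1 + t ^ 2) + a = 0 := by
    intro t h
    have hden : (1 + t ^ 2) * (a + √(1 + t ^ 2)) ^ 2 ≠ 0 := by
      have : a + √(1 + t ^ 2) ≠ 0 := by linarith [one_le_sqrt_one_add_sq t]
      positivity
    simpa [hden] using h
  rintro t ⟨ht, hft⟩ u ⟨hu, hfu⟩
  have ht0 := numerator_eq_zero t hft
  have hu0 := numerator_eq_zero u hfu
  have hcoef : 2 * a ^ 2 - 1 ≠ 0 := by
    intro h
    rw [h, zero_mul, zero_add] at ht0
    rw [ht0] at h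
    norm_num at h
  have hsqrt : √(1 + t ^ 2) = √(1 + u ^ 2) :=
    mul_left_cancel₀ hcoef (by linarith)
  rw [sqrt_inj (by positivity) (by positivity), add_right_inj] at hsqrt
  exact (pow_left_inj₀ ht hu two_ne_zero).1 hsqrt

theorem arctan_gt_of_mem_Ioo_general (a : ℝ) (ha1 : 1 / 2 < a)
    (x : ℝ) (hx : 0 < x) :
    Real.arctan x > 4 * a * (1 - a ^ 2) * x / (a + Real.sqrt (1 + x ^ 2)) := by
  have h := strictMonoOn_arctanGap (a := a) (by linarith) self_mem_Ici hx.le hx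
  simp only [arctanGap, arctan_zero, mul_zero, zero_div, sub_zero] at h
  linarith

theorem arctan_gt_of_mem_Ioo (a : ℝ) (ha1 : 1 / 2 < a) (ha2 : a < 2 / Real.pi)
    (x : ℝ) (hx : 0 < x) :
    Real.arctan x > 4 * a * (1 - a ^ 2) * x / (a + Real.sqrt (1 + x ^ 2)) :=
  arctan_gt_of_mem_Ioo_general a ha1 x hx
end

section
/- Let a be a real number with 2/π ≤ a < √2/2, and define g_a(x) = (x + x³ + a·x·√(1 + x²))/((1 + x²)(1 + a·√(1 + x²))) − arctan x for x > 0. Then g_a(x) < 0 for all x > 0. -/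
/-!
Put `θ = arctan x`, so that `cos θ = 1 / √(1 + x²)` and `sin θ = x / √(1 + x²)`. Then
`g_a(x) = sin θ (1 + a cos θ) / (cos θ + a) - θ`, and the claim becomes positivity of
`F(θ) = θ (cos θ + a) - sin θ (1 + a cos θ)` on `(0, π/2)`. Since `F' = sin θ (2 a sin θ - θ)`
and `sin θ / θ` is strictly decreasing, `F'` changes sign at most once, from `+` to `-`. So `F` is
positive inside `(0, π/2)` as soon as it is nonnegative at both ends: `F 0 = 0` and
`F (π/2) = a π / 2 - 1 ≥ 0` because `a ≥ 2 / π`.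
-/

open Real Set

lemma sin_div_self_strictAntiOn : StrictAntiOn (fun t => sin t / t) (Ioc 0 π) := by
  intro s hs t ht hst
  have h0 : (0 : ℝ) ∈ Icc 0 π := ⟨le_rfl, pi_pos.le⟩
  simpa using strictConcaveOn_sin_Icc.secant_strict_mono h0 (Ioc_subset_Icc_self hs)
    (Ioc_subset_Icc_self ht) hs.1.ne' ht.1.ne' hst

lemma pos_of_nonneg_endpoints_of_deriv_sign_change {f : ℝ → ℝ} {l r θ : ℝ}
    (hf : ContinuousOn f (Icc l r)) (hl : 0 ≤ f l) (hr : 0 ≤ f r)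
    (hsign : ∀ s ∈ Ioo l r, ∀ t ∈ Ioo l r, s < t → deriv f s ≤ 0 → deriv f t < 0)
    (hθ : θ ∈ Ioo l r) : 0 < f θ := by
  by_cases hinc : ∀ t ∈ Ioo l θ, 0 < deriv f t
  · have hmono : StrictMonoOn f (Icc l θ) :=
      strictMonoOn_of_deriv_pos (convex_Icc l θ) (hf.mono (Icc_subset_Icc_right hθ.2.le))
        (by rwa [interior_Icc])
    exact hl.trans_lt (hmono (left_mem_Icc.2 hθ.1.le) (right_mem_Icc.2 hθ.1.le) hθ.1)
  · push Not at hinc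
    obtain ⟨s, hs, hs_nonpos⟩ := hinc
    have hanti : StrictAntiOn f (Icc θ r) := by
      refine strictAntiOn_of_deriv_neg (convex_Icc θ r) (hf.mono (Icc_subset_Icc_left hθ.1.le)) ?_
      rw [interior_Icc]
      exact fun t ht => hsign s ⟨hs.1, hs.2.trans hθ.2⟩ t ⟨hθ.1.trans ht.1, ht.2⟩
        (hs.2.trans ht.1) hs_nonpos
    exact hr.trans_lt (hanti (left_mem_Icc.2 hθ.2.le) (right_mem_Icc.2 hθ.2.le) hθ.2)

noncomputable def shaferGap (a t : ℝ) : ℝ := t * (cos t + a) - sin t * (1 + a * cos t)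

lemma hasDerivAt_shaferGap (a t : ℝ) :
    HasDerivAt (shaferGap a) (sin t * (2 * a * sin t - t)) t := by
  have h := ((hasDerivAt_id t).mul ((hasDerivAt_cos t).add_const a)).sub
    ((hasDerivAt_sin t).mul (((hasDerivAt_cos t).const_mul a).const_add 1))
  refine h.congr_deriv ?_
  simp only [id]
  linear_combination (-a) * sin_sq_add_cos_sq t

lemma continuous_shaferGap (a : ℝ) : Continuous (shaferGap a) := by
  unfold shaferGap
  fun_prop

lemma shaferGap_pos {a θ : ℝ} (ha : 2 / π ≤ a) (hθ : θ ∈ Ioo 0 (π / 2)) :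
    0 < shaferGap a θ := by
  have ha0 : 0 < a := (div_pos two_pos pi_pos).trans_le ha
  refine pos_of_nonneg_endpoints_of_deriv_sign_change (continuous_shaferGap a).continuousOn
    (by simp [shaferGap]) ?_ ?_ hθ
  · have : 2 ≤ a * π := by rwa [div_le_iff₀ pi_pos] at ha
    simp only [shaferGap, cos_pi_div_two, sin_pi_div_two]
    linarith
  · intro s hs t ht hst hs_nonpos
    have hsin : ∀ u ∈ Ioo 0 (π / 2), 0 < sin u :=
      fun u hu => sin_pos_of_pos_of_lt_pi hu.1 (by linarith [hu.2, pi_pos])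
    rw [(hasDerivAt_shaferGap a s).deriv] at hs_nonpos
    rw [(hasDerivAt_shaferGap a t).deriv]
    have hs_le : 2 * a * sin s - s ≤ 0 :=
      (mul_nonpos_iff_pos_imp_nonpos.1 hs_nonpos).1 (hsin s hs)
    have hdec : sin t / t < sin s / s :=
      sin_div_self_strictAntiOn ⟨hs.1, by linarith [hs.2, pi_pos]⟩
        ⟨ht.1, by linarith [ht.2, pi_pos]⟩ hst
    rw [div_lt_div_iff₀ ht.1 hs.1] at hdec
    have ht_lt : 2 * a * sin t - t < 0 := by nlinarith [ht.1, hs.1]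
    exact mul_neg_of_pos_of_neg (hsin t ht) ht_lt

lemma shafer_expr_eq {a : ℝ} (ha : 0 ≤ a) (x : ℝ) :
    (x + x ^ 3 + a * x * √(1 + x ^ 2)) / ((1 + x ^ 2) * (1 + a * √(1 + x ^ 2))) =
      sin (arctan x) * (1 + a * cos (arctan x)) / (cos (arctan x) + a) := by
  have hs : 0 < √(1 + x ^ 2) := sqrt_pos.2 (by positivity)
  have hs2 : √(1 + x ^ 2) ^ 2 = 1 + x ^ 2 := sq_sqrt (by positivity)
  rw [sin_arctan, cos_arctan]
  generalize √(1 + x ^ 2) = s at hs hs2 ⊢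
  field_simp
  linear_combination x * a * hs2

theorem shafer_g_neg_general (a : ℝ) (ha1 : 2 / Real.pi ≤ a) :
    ∀ x : ℝ, 0 < x →
      (x + x ^ 3 + a * x * Real.sqrt (1 + x ^ 2)) /
        ((1 + x ^ 2) * (1 + a * Real.sqrt (1 + x ^ 2))) - Real.arctan x < 0 := by
  intro x hx
  have ha0 : 0 < a := (div_pos two_pos pi_pos).trans_le ha1
  have hθ : arctan x ∈ Ioo 0 (π / 2) :=
    ⟨arctan_zero ▸ arctan_strictMono hx, arctan_lt_pi_div_two x⟩
  have hden : 0 < cos (arctan x) + a := by linarith [cos_arctan_pos x]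
  rw [shafer_expr_eq ha0.le, sub_neg, div_lt_iff₀ hden]
  exact sub_pos.1 (shaferGap_pos ha1 hθ)

theorem shafer_g_neg (a : ℝ) (ha1 : 2 / Real.pi ≤ a) (ha2 : a < Real.sqrt 2 / 2) :
    ∀ x : ℝ, 0 < x →
      (x + x ^ 3 + a * x * Real.sqrt (1 + x ^ 2)) /
        ((1 + x ^ 2) * (1 + a * Real.sqrt (1 + x ^ 2))) - Real.arctan x < 0 :=
  shafer_g_neg_general a ha1
end
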